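/- arXiv:1405.5605 — 3 statements merged into one kernel-verified Lean document; each statement's English description precedes it below -/
import Mathlib

section
/- Let t be the Thue–Morse sequence and h the sequence counting 0s mod 2 in binary representations. Then LSD(h, t) = 1/3 and USD(h, t) = 2/3. -/
/-- The Thue–Morse sequence: parity of the number of 1s in binary representation. -/
def t (n : ℕ) : ℕ := (Nat.digits 2 n).count 1 % 2

/-- The sequence h: parity of the number of 0s in the binary representation (h 0 = 0). -/
def hseq (n : ℕ) : ℕ := (Nat.digits 2 n).count 0 % 2

noncomputable def SDp (x y : ℕ → ℕ) (n : ℕ) : ℝ :=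
  (∑ i ∈ Finset.range n, if x i = y i then (1 : ℝ) else 0) / n

noncomputable def LSD (x y : ℕ → ℕ) : ℝ := Filter.liminf (SDp x y) Filter.atTop
noncomputable def USD (x y : ℕ → ℕ) : ℝ := Filter.limsup (SDp x y) Filter.atTop

/-!
Appending a binary digit to `n ≥ 1` changes the parity of exactly one of its two digit counts, so
`hseq` and `t` agree at `2n` and `2n + 1` exactly when they disagree at `n`. For the agreement count
`A N = #{i < N | hseq i = t i}` this gives `A (2N) + 2 A N = 2N + 1` and
`A (2N + 1) + A N + A (N + 1) = 2N + 2`, hence `N ≤ 3 A N ≤ 2N + 1`, and `3 A N = 2·4^m + 1` at both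
`N = 4^m` and `N = 2·4^m`. The agreement density thus stays between `1/3` and `2/3 + 1/(3N)`, and it
tends to `2/3` along `4^m` and to `1/3` along `2·4^m`.
-/

open Filter Topology Finset

section SqueezeAlongSubsequence

variable {α β γ : Type*} [ConditionallyCompleteLinearOrder β] [TopologicalSpace β] [OrderTopology β]
  {l : Filter α} {l' : Filter γ} [l'.NeBot] {f g : α → β} {φ : γ → α} {a : β}

theorem Filter.limsup_eq_of_eventuallyLE_of_tendsto_comp (hg : Tendsto g l (𝓝 a))
    (hfg : f ≤ᶠ[l] g) (hφ : Tendsto φ l' l) (hf : Tendsto (f ∘ φ) l' (𝓝 a)) :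
    limsup f l = a := by
  have : l.NeBot := hφ.neBot
  have hcobdd : IsCoboundedUnder (· ≤ ·) (map φ l') f := by
    simpa [IsCoboundedUnder, map_map] using hf.isCoboundedUnder_le
  apply le_antisymm
  · calc limsup f l ≤ limsup g l := limsup_le_limsup hfg (hcobdd.mono (map_mono hφ))
            hg.isBoundedUnder_le
      _ = a := hg.limsup_eq
  · calc a = limsup f (map φ l') := by rw [← limsup_comp, hf.limsup_eq]
      _ ≤ limsup f l := limsup_le_limsup_of_le hφ hcobdd (hg.isBoundedUnder_le.mono_le hfg)

theorem Filter.liminf_eq_of_eventuallyLE_of_tendsto_comp (hg : Tendsto g l (𝓝 a))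
    (hgf : g ≤ᶠ[l] f) (hφ : Tendsto φ l' l) (hf : Tendsto (f ∘ φ) l' (𝓝 a)) :
    liminf f l = a :=
  limsup_eq_of_eventuallyLE_of_tendsto_comp (β := βᵒᵈ) hg hgf hφ hf

end SqueezeAlongSubsequence

def agreeCount (x y : ℕ → ℕ) (N : ℕ) : ℕ := #{i ∈ range N | x i = y i}

section AgreeCount

variable (x y : ℕ → ℕ) (N : ℕ)

theorem SDp_eq_agreeCount_div : SDp x y N = agreeCount x y N / N := by
  rw [SDp, agreeCount, sum_boole]

theorem agreeCount_succ :
    agreeCount x y (N + 1) = agreeCount x y N + if x N = y N then 1 else 0 := by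
  simp only [agreeCount, card_filter, sum_range_succ]

theorem agreeCount_le_agreeCount_succ : agreeCount x y N ≤ agreeCount x y (N + 1) := by
  rw [agreeCount_succ]; split_ifs <;> omega

theorem agreeCount_succ_le : agreeCount x y (N + 1) ≤ agreeCount x y N + 1 := by
  rw [agreeCount_succ]; split_ifs <;> omega

end AgreeCount

theorem hseq_eq_t_two_mul_add_iff {n b : ℕ} (hn : n ≠ 0) (hb : b < 2) :
    hseq (2 * n + b) = t (2 * n + b) ↔ hseq n ≠ t n := by
  rw [add_comm, hseq, t, Nat.digits_add 2 (by norm_num) b n hb (Or.inr hn), hseq, t]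
  interval_cases b <;> simp only [List.count_cons, beq_iff_eq] <;> grind

local notation "A" => agreeCount hseq t

theorem agreeCount_hseq_t_two_mul_add_succ {n b : ℕ} (hn : n ≠ 0) (hb : b < 2) :
    A (2 * n + b + 1) + A (n + 1) = A (2 * n + b) + A n + 1 := by
  have hflip := hseq_eq_t_two_mul_add_iff hn hb
  rw [agreeCount_succ, agreeCount_succ]
  split_ifs <;> grind

theorem agreeCount_hseq_t_two_mul {M : ℕ} (hM : 1 ≤ M) : A (2 * M) + 2 * A M = 2 * M + 1 := by
  induction M, hM using Nat.le_induction with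
  | base => decide
  | succ M hM ih =>
    have h0 := agreeCount_hseq_t_two_mul_add_succ (b := 0) (by omega : M ≠ 0) (by norm_num)
    rw [add_zero] at h0
    have h1 := agreeCount_hseq_t_two_mul_add_succ (b := 1) (by omega : M ≠ 0) (by norm_num)
    rw [show 2 * (M + 1) = 2 * M + 1 + 1 by ring]
    omega

theorem agreeCount_hseq_t_two_mul_add_one {M : ℕ} (hM : 1 ≤ M) :
    A (2 * M + 1) + A M + A (M + 1) = 2 * M + 2 := by
  have heven := agreeCount_hseq_t_two_mul hM
  have hstep := agreeCount_hseq_t_two_mul_add_succ (b := 0) (by omega : M ≠ 0) (by norm_num)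
  rw [add_zero] at hstep
  omega

-- `2 A N + A (N + 1) = 3 A N + [hseq N = t N]`; the bounds on `3 A N` alone are not inductive.
theorem agreeCount_hseq_t_bounds {N : ℕ} (hN : 1 ≤ N) :
    N + 2 ≤ 2 * A N + A (N + 1) ∧ 2 * A N + A (N + 1) ≤ 2 * N + 1 := by
  induction N using Nat.strong_induction_on with
  | _ N ih =>
    obtain rfl | hN2 := eq_or_lt_of_le hN
    · decide
    obtain ⟨M, rfl | rfl⟩ := Nat.even_or_odd' N
    all_goals
      have hM : 1 ≤ M := by omega
      have ihM := ih M (by omega) hM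
      have hmono := agreeCount_le_agreeCount_succ hseq t M
      have hmono' := agreeCount_succ_le hseq t M
      have heven := agreeCount_hseq_t_two_mul hM
      have hodd := agreeCount_hseq_t_two_mul_add_one hM
      have hevenSucc := agreeCount_hseq_t_two_mul (by omega : 1 ≤ M + 1)
      rw [show 2 * (M + 1) = 2 * M + 1 + 1 by ring] at hevenSucc
      omega

theorem le_three_mul_agreeCount_hseq_t (N : ℕ) : N ≤ 3 * A N := by
  obtain rfl | hN := Nat.eq_zero_or_pos N
  · simp
  have := agreeCount_hseq_t_bounds hN
  have := agreeCount_succ_le hseq t N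
  omega

theorem three_mul_agreeCount_hseq_t_le (N : ℕ) : 3 * A N ≤ 2 * N + 1 := by
  obtain rfl | hN := Nat.eq_zero_or_pos N
  · simp [agreeCount]
  have := agreeCount_hseq_t_bounds hN
  have := agreeCount_le_agreeCount_succ hseq t N
  omega

theorem three_mul_agreeCount_hseq_t_four_pow (m : ℕ) :
    3 * A (4 ^ m) = 2 * 4 ^ m + 1 ∧ 3 * A (2 * 4 ^ m) = 2 * 4 ^ m + 1 := by
  induction m with
  | zero => decide
  | succ m ih =>
    have hpos : 1 ≤ 4 ^ m := Nat.one_le_pow _ _ (by norm_num)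
    have h1 := agreeCount_hseq_t_two_mul hpos
    have h2 := agreeCount_hseq_t_two_mul (by omega : 1 ≤ 2 * 4 ^ m)
    have h3 := agreeCount_hseq_t_two_mul (by omega : 1 ≤ 4 ^ m * 4)
    rw [show 2 * (2 * 4 ^ m) = 4 ^ m * 4 by ring] at h2
    rw [pow_succ]
    omega

theorem SDp_hseq_t_le (N : ℕ) : SDp hseq t N ≤ (2 * N + 1) / (3 * N) := by
  rw [SDp_eq_agreeCount_div, ← div_div]
  gcongr
  rw [le_div_iff₀ three_pos, mul_comm]
  exact_mod_cast three_mul_agreeCount_hseq_t_le N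

theorem one_third_le_SDp_hseq_t {N : ℕ} (hN : N ≠ 0) : 1 / 3 ≤ SDp hseq t N := by
  rw [SDp_eq_agreeCount_div, le_div_iff₀ (by positivity), one_div_mul_eq_div,
    div_le_iff₀ three_pos, mul_comm]
  exact_mod_cast le_three_mul_agreeCount_hseq_t N

theorem SDp_hseq_t_four_pow (m : ℕ) :
    SDp hseq t (4 ^ m) = (2 * (4 ^ m : ℕ) + 1 : ℝ) / (3 * (4 ^ m : ℕ)) := by
  have h : (3 * A (4 ^ m) : ℝ) = 2 * (4 ^ m : ℕ) + 1 := by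
    exact_mod_cast (three_mul_agreeCount_hseq_t_four_pow m).1
  rw [SDp_eq_agreeCount_div, ← h, mul_div_mul_left _ _ three_ne_zero]

theorem SDp_hseq_t_two_mul_four_pow (m : ℕ) :
    SDp hseq t (2 * 4 ^ m) = (2 * (4 ^ m : ℕ) + 1 : ℝ) / (3 * (4 ^ m : ℕ)) / 2 := by
  have h : (3 * A (2 * 4 ^ m) : ℝ) = 2 * (4 ^ m : ℕ) + 1 := by
    exact_mod_cast (three_mul_agreeCount_hseq_t_four_pow m).2
  rw [SDp_eq_agreeCount_div, ← h, div_div, Nat.cast_mul, Nat.cast_two]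
  field_simp

theorem tendsto_two_mul_add_one_div_three_mul :
    Tendsto (fun N : ℕ => (2 * N + 1 : ℝ) / (3 * N)) atTop (𝓝 (2 / 3)) := by
  have h := (tendsto_one_div_atTop_nhds_zero_nat.const_mul (1 / 3 : ℝ)).const_add (2 / 3 : ℝ)
  rw [mul_zero, add_zero] at h
  refine h.congr' ?_
  filter_upwards [eventually_ne_atTop 0] with N hN
  field_simp

theorem lsd_usd_h_t : LSD hseq t = 1/3 ∧ USD hseq t = 2/3 := by
  have hpow : Tendsto (fun m : ℕ => 4 ^ m) atTop atTop :=
    tendsto_pow_atTop_atTop_of_one_lt (by norm_num)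
  have hratio := tendsto_two_mul_add_one_div_three_mul.comp hpow
  constructor
  · have hhalf := hratio.div_const 2
    rw [show (2 / 3 : ℝ) / 2 = 1 / 3 by norm_num] at hhalf
    refine liminf_eq_of_eventuallyLE_of_tendsto_comp tendsto_const_nhds ?_
      (tendsto_atTop_mono (fun m => Nat.le_mul_of_pos_left (4 ^ m) two_pos) hpow)
      (hhalf.congr fun m => (SDp_hseq_t_two_mul_four_pow m).symm)
    filter_upwards [eventually_ne_atTop 0] with N hN using one_third_le_SDp_hseq_t hN
  · exact limsup_eq_of_eventuallyLE_of_tendsto_comp tendsto_two_mul_add_one_div_three_mul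
      (Eventually.of_forall SDp_hseq_t_le) hpow
      (hratio.congr fun m => (SDp_hseq_t_four_pow m).symm)
end

section
/- Let n, i ∈ ℕ with gcd(i, 2^n) ≤ 2^{n-2}, and let x, y be infinite binary sequences each of which is a concatenation of blocks from {t_n, t̄_n}. Then 1/4 ≤ LSD(x, y[i..∞]) ≤ USD(x, y[i..∞]) ≤ 3/4. -/
/-!
Let `t` be the Thue–Morse sequence. A block sequence of order `n` has the form
`x (k * 2^n + j) = ε_k ⊕ t j`, hence `x (2m+1) = 1 - x (2m)` when `n ≥ 1`, and also
`x (4s+1) = x (4s+2)` when `n ≥ 2`. Write `i = 2^v d` with `d` odd; the gcd condition says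
`v + 2 ≤ n`.

For an even shift, the matches at `2m` and `2m+1` coincide, so on `[0, 2M)` the pair
`(x, y[2i..])` has twice as many matches as the decimated pair `(x(2·), y(2·)[i..])` on
`[0, M)`, and decimation lowers the order by one. This reduces to an odd shift and order `≥ 2`.
There, in every window of four positions, the pair of positions read at `4s+1, 4s+2` in `y`
has exactly one match (`x` alternates, `y` is constant), so each window has between 1 and 3
matches. Hence the match count on `[0, m)` lies between `m/4` and `3m/4` up to `O(2^v)`.
-/

def mu (l : List ℕ) : List ℕ := l.flatMap (fun b => [b, 1 - b])
def tWord (n : ℕ) : List ℕ := mu^[n] [0]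
def comp (l : List ℕ) : List ℕ := l.map (fun b => 1 - b)

/-- `x` is an infinite concatenation of blocks from `{t_n, t̄_n}`. -/
def IsBlockSeq (n : ℕ) (x : ℕ → ℕ) : Prop :=
  ∀ k : ℕ, (List.range (2 ^ n)).map (fun j => x (k * 2 ^ n + j)) = tWord n ∨
    (List.range (2 ^ n)).map (fun j => x (k * 2 ^ n + j)) = comp (tWord n)

open Finset Filter Topology

def thueMorse (m : ℕ) : ℕ := (Nat.digits 2 m).sum % 2

lemma thueMorse_le_one (m : ℕ) : thueMorse m ≤ 1 :=
  Nat.le_of_lt_succ (Nat.mod_lt _ two_pos)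

@[simp]
lemma thueMorse_two_mul (m : ℕ) : thueMorse (2 * m) = thueMorse m := by
  rcases Nat.eq_zero_or_pos m with rfl | hm
  · rfl
  · simp [thueMorse, Nat.digits_of_two_le_of_pos le_rfl (by omega : 0 < 2 * m)]

@[simp]
lemma thueMorse_two_mul_add_one (m : ℕ) : thueMorse (2 * m + 1) = 1 - thueMorse m := by
  rw [thueMorse, thueMorse, Nat.digits_of_two_le_of_pos le_rfl (by omega),
    show (2 * m + 1) % 2 = 1 by omega, show (2 * m + 1) / 2 = m by omega, List.sum_cons]
  omega

lemma map_range_two_mul {α : Type*} (f : ℕ → α) (n : ℕ) :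
    (List.range (2 * n)).map f =
      (List.range n).flatMap (fun j => [f (2 * j), f (2 * j + 1)]) := by
  induction n with
  | zero => rfl
  | succ n ih =>
    rw [show 2 * (n + 1) = 2 * n + 1 + 1 by ring, List.range_succ, List.range_succ,
      List.range_succ, List.flatMap_append, ← ih]
    simp

lemma tWord_eq_map_range (n : ℕ) : tWord n = (List.range (2 ^ n)).map thueMorse := by
  induction n with
  | zero => rfl
  | succ n ih =>
    rw [tWord, Function.iterate_succ_apply', ← tWord, ih, pow_succ', map_range_two_mul, mu,
      List.flatMap_map]
    simp

lemma isBlockSeq_iff {n : ℕ} {x : ℕ → ℕ} : IsBlockSeq n x ↔ ∀ k : ℕ,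
    (∀ j < 2 ^ n, x (k * 2 ^ n + j) = thueMorse j) ∨
      (∀ j < 2 ^ n, x (k * 2 ^ n + j) = 1 - thueMorse j) := by
  simp only [IsBlockSeq, tWord_eq_map_range, comp, List.map_map, List.map_inj_left,
    List.mem_range, Function.comp_apply]

lemma two_mul_mul_two_pow_add (n k j : ℕ) : 2 * (k * 2 ^ n + j) = k * 2 ^ (n + 1) + 2 * j := by
  ring

namespace IsBlockSeq

variable {n : ℕ} {x : ℕ → ℕ}

lemma le_one (hx : IsBlockSeq n x) (m : ℕ) : x m ≤ 1 := by
  have hj : m % 2 ^ n < 2 ^ n := Nat.mod_lt _ (by positivity)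
  have hm : m / 2 ^ n * 2 ^ n + m % 2 ^ n = m := Nat.div_add_mod' m _
  rcases isBlockSeq_iff.1 hx (m / 2 ^ n) with h | h <;> have := h _ hj <;> rw [hm] at this
  · exact this ▸ thueMorse_le_one _
  · omega

lemma comp_two_mul (hx : IsBlockSeq (n + 1) x) : IsBlockSeq n (fun m => x (2 * m)) := by
  refine isBlockSeq_iff.2 fun k => ?_
  rcases isBlockSeq_iff.1 hx k with h | h
  · exact .inl fun j hj => by rw [two_mul_mul_two_pow_add, h _ (by omega), thueMorse_two_mul]
  · exact .inr fun j hj => by rw [two_mul_mul_two_pow_add, h _ (by omega), thueMorse_two_mul]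

lemma apply_two_mul_add_one (hx : IsBlockSeq (n + 1) x) (m : ℕ) :
    x (2 * m + 1) = 1 - x (2 * m) := by
  have hj : m % 2 ^ n < 2 ^ n := Nat.mod_lt _ (by positivity)
  have hj' : 2 * (m % 2 ^ n) + 1 < 2 ^ (n + 1) := by rw [pow_succ]; omega
  have e₀ := two_mul_mul_two_pow_add n (m / 2 ^ n) (m % 2 ^ n)
  rw [Nat.div_add_mod'] at e₀
  rw [e₀, add_assoc]
  rcases isBlockSeq_iff.1 hx (m / 2 ^ n) with h | h <;>
    rw [h _ hj', h _ (by omega)] <;> simp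

lemma apply_four_mul_add_two (hx : IsBlockSeq (n + 2) x) (s : ℕ) :
    x (4 * s + 2) = x (4 * s + 1) := by
  have h₁ := hx.apply_two_mul_add_one (2 * s)
  have h₂ := hx.comp_two_mul.apply_two_mul_add_one s
  rw [show 4 * s + 2 = 2 * (2 * s + 1) by ring, h₂, show 4 * s + 1 = 2 * (2 * s) + 1 by ring,
    h₁, ← mul_assoc]

end IsBlockSeq

lemma sum_range_two_mul {M : Type*} [AddCommMonoid M] (f : ℕ → M) (n : ℕ) :
    ∑ j ∈ range (2 * n), f j = ∑ u ∈ range n, (f (2 * u) + f (2 * u + 1)) := by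
  induction n with
  | zero => simp
  | succ n ih =>
    rw [show 2 * (n + 1) = 2 * n + 1 + 1 by ring, sum_range_succ, sum_range_succ, ih,
      sum_range_succ, add_assoc]

def matchCount (x y : ℕ → ℕ) (m : ℕ) : ℕ := ∑ j ∈ range m, if x j = y j then 1 else 0

lemma matchCount_mono (x y : ℕ → ℕ) : Monotone (matchCount x y) := fun _ _ h =>
  sum_le_sum_of_subset (range_subset_range.2 h)

lemma matchCount_le (x y : ℕ → ℕ) (m : ℕ) : matchCount x y m ≤ m :=
  (sum_le_card_nsmul _ _ 1 fun _ _ => by split_ifs <;> simp).trans (by simp)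

lemma SDp_eq_matchCount_div (x y : ℕ → ℕ) (m : ℕ) :
    SDp x y m = (matchCount x y m : ℝ) / m := by
  simp [SDp, matchCount]

lemma matchCount_two_mul_of_isBlockSeq {n : ℕ} {x y : ℕ → ℕ} (hx : IsBlockSeq (n + 1) x)
    (hy : IsBlockSeq (n + 1) y) (i M : ℕ) :
    matchCount x (fun j => y (2 * i + j)) (2 * M) =
      2 * matchCount (fun m => x (2 * m)) (fun j => y (2 * (i + j))) M := by
  rw [matchCount, matchCount, sum_range_two_mul, mul_sum]
  refine sum_congr rfl fun u _ => ?_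
  have hx₁ := hx.apply_two_mul_add_one u
  have hy₁ := hy.apply_two_mul_add_one (i + u)
  have := hx.le_one (2 * u)
  have := hy.le_one (2 * (i + u))
  rw [← add_assoc, ← mul_add, hx₁, hy₁]
  split_ifs <;> omega

lemma match_indicator_pair_eq_one {m n d : ℕ} {x y : ℕ → ℕ} (hx : IsBlockSeq (m + 1) x)
    (hy : IsBlockSeq (n + 2) y) {u : ℕ} (hu : (d + 2 * u) % 4 = 1) :
    (if x (2 * u) = y (d + 2 * u) then 1 else 0) +
      (if x (2 * u + 1) = y (d + (2 * u + 1)) then 1 else 0) = 1 := by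
  have hy₂ := hy.apply_four_mul_add_two ((d + 2 * u) / 4)
  rw [show 4 * ((d + 2 * u) / 4) + 1 = d + 2 * u by omega,
    show 4 * ((d + 2 * u) / 4) + 2 = d + (2 * u + 1) by omega] at hy₂
  have := hx.le_one (2 * u)
  have := hy.le_one (d + 2 * u)
  rw [hx.apply_two_mul_add_one, hy₂]
  split_ifs <;> omega

lemma matchCount_four_mul_of_odd {n d : ℕ} {x y : ℕ → ℕ} (hx : IsBlockSeq (n + 2) x)
    (hy : IsBlockSeq (n + 2) y) (hd : Odd d) (M : ℕ) :
    M ≤ matchCount x (fun j => y (d + j)) (4 * M) ∧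
      matchCount x (fun j => y (d + j)) (4 * M) ≤ 3 * M := by
  set p : ℕ → ℕ := fun u => (if x (2 * u) = y (d + 2 * u) then 1 else 0) +
    (if x (2 * u + 1) = y (d + (2 * u + 1)) then 1 else 0) with hp
  have hp_le (u : ℕ) : p u ≤ 2 := by simp only [hp]; split_ifs <;> omega
  have hd₂ := Nat.odd_iff.1 hd
  -- of the pairs `2w` and `2w + 1`, exactly one is read at a position `≡ 1 mod 4` of `y`
  have hwindow (w : ℕ) : 1 ≤ p (2 * w) + p (2 * w + 1) ∧ p (2 * w) + p (2 * w + 1) ≤ 3 := by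
    have := hp_le (2 * w)
    have := hp_le (2 * w + 1)
    by_cases h : (d + 2 * (2 * w)) % 4 = 1
    · have : p (2 * w) = 1 := match_indicator_pair_eq_one (m := n + 1) hx hy h
      omega
    · have : p (2 * w + 1) = 1 := match_indicator_pair_eq_one (m := n + 1) hx hy (by omega)
      omega
  have hsum : matchCount x (fun j => y (d + j)) (4 * M) =
      ∑ w ∈ range M, (p (2 * w) + p (2 * w + 1)) := by
    rw [matchCount, show 4 * M = 2 * (2 * M) by ring, sum_range_two_mul, sum_range_two_mul]
  rw [hsum]
  constructor
  · simpa using card_nsmul_le_sum (range M) _ 1 fun w _ => (hwindow w).1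
  · simpa [mul_comm] using sum_le_card_nsmul (range M) _ 3 fun w _ => (hwindow w).2

lemma matchCount_two_pow_mul_of_odd {n d : ℕ} (hd : Odd d) (v : ℕ) {x y : ℕ → ℕ}
    (hx : IsBlockSeq (n + 2 + v) x) (hy : IsBlockSeq (n + 2 + v) y) (M : ℕ) :
    2 ^ v * 4 * M ≤ 4 * matchCount x (fun j => y (2 ^ v * d + j)) (2 ^ v * 4 * M) ∧
      4 * matchCount x (fun j => y (2 ^ v * d + j)) (2 ^ v * 4 * M) ≤ 3 * (2 ^ v * 4 * M) := by
  induction v generalizing x y with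
  | zero =>
    have := matchCount_four_mul_of_odd hx hy hd M
    simp only [pow_zero, one_mul]
    omega
  | succ v ih =>
    have := ih hx.comp_two_mul hy.comp_two_mul
    rw [pow_succ', mul_assoc 2 (2 ^ v) d, mul_assoc 2, mul_assoc 2,
      matchCount_two_mul_of_isBlockSeq hx hy]
    omega

lemma exists_two_pow_mul_odd_of_four_mul_gcd_le {n i : ℕ}
    (hg : 4 * Nat.gcd i (2 ^ n) ≤ 2 ^ n) :
    ∃ v d, Odd d ∧ i = 2 ^ v * d ∧ v + 2 ≤ n := by
  have hi : i ≠ 0 := by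
    rintro rfl
    rw [Nat.gcd_zero_left] at hg
    have : 0 < 2 ^ n := by positivity
    omega
  obtain ⟨v, d, hd, rfl⟩ := Nat.exists_eq_two_pow_mul_odd hi
  refine ⟨v, d, hd, rfl, ?_⟩
  have hdvd : 2 ^ min v n ∣ Nat.gcd (2 ^ v * d) (2 ^ n) :=
    Nat.dvd_gcd (dvd_mul_of_dvd_left (pow_dvd_pow 2 (min_le_left v n)) d)
      (pow_dvd_pow 2 (min_le_right v n))
  have hle : 2 ^ (min v n + 2) ≤ 2 ^ n := by
    rw [pow_add]
    linarith [Nat.le_of_dvd (Nat.gcd_pos_of_pos_right _ (by positivity)) hdvd]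
  have := (Nat.pow_le_pow_iff_right (by norm_num)).1 hle
  omega

lemma le_four_mul_add_of_periodic_bounds {G : ℕ → ℕ} (hG : Monotone G) {P : ℕ}
    (hP₀ : 0 < P)
    (hP : ∀ M, P * M ≤ 4 * G (P * M) ∧ 4 * G (P * M) ≤ 3 * (P * M)) (m : ℕ) :
    m ≤ 4 * G m + P ∧ 4 * G m ≤ 3 * m + 3 * P := by
  have hm : P * (m / P) + m % P = m := Nat.div_add_mod m P
  have hr : m % P < P := Nat.mod_lt m hP₀
  have hlow := (hP (m / P)).1
  have hup := (hP (m / P + 1)).2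
  rw [mul_add, mul_one] at hup
  have h₁ : G (P * (m / P)) ≤ G m := hG (by omega)
  have h₂ : G m ≤ G (P * (m / P) + P) := hG (by omega)
  omega

section Density

variable (x y : ℕ → ℕ)

lemma SDp_nonneg (m : ℕ) : 0 ≤ SDp x y m := by
  rw [SDp_eq_matchCount_div]; positivity

lemma SDp_le_one (m : ℕ) : SDp x y m ≤ 1 := by
  rw [SDp_eq_matchCount_div]
  exact div_le_one_of_le₀ (by exact_mod_cast matchCount_le x y m) (Nat.cast_nonneg m)

lemma isBoundedUnder_le_SDp : IsBoundedUnder (· ≤ ·) atTop (SDp x y) :=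
  isBoundedUnder_of ⟨1, SDp_le_one x y⟩

lemma isBoundedUnder_ge_SDp : IsBoundedUnder (· ≥ ·) atTop (SDp x y) :=
  isBoundedUnder_of ⟨0, SDp_nonneg x y⟩

lemma LSD_le_USD : LSD x y ≤ USD x y :=
  liminf_le_limsup (isBoundedUnder_le_SDp x y) (isBoundedUnder_ge_SDp x y)

variable {x y}

lemma le_LSD_of_le_matchCount_add {a C : ℝ} (h : ∀ m : ℕ, a * m ≤ matchCount x y m + C) :
    a ≤ LSD x y := by
  have ht : Tendsto (fun m : ℕ => a - C / m) atTop (𝓝 a) := by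
    simpa using (tendsto_const_div_atTop_nhds_zero_nat C).const_sub a
  have hle : ∀ᶠ m : ℕ in atTop, a - C / m ≤ SDp x y m := by
    filter_upwards [eventually_gt_atTop 0] with m hm
    have hm : (0 : ℝ) < m := by exact_mod_cast hm
    rw [SDp_eq_matchCount_div, sub_le_iff_le_add, ← add_div, le_div_iff₀ hm]
    linarith [h m]
  calc a = liminf (fun m : ℕ => a - C / m) atTop := ht.liminf_eq.symm
    _ ≤ LSD x y := liminf_le_liminf hle ht.isBoundedUnder_ge
      (isBoundedUnder_le_SDp x y).isCoboundedUnder_ge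

lemma USD_le_of_matchCount_le_add {b C : ℝ}
    (h : ∀ m : ℕ, (matchCount x y m : ℝ) ≤ b * m + C) : USD x y ≤ b := by
  have ht : Tendsto (fun m : ℕ => b + C / m) atTop (𝓝 b) := by
    simpa using (tendsto_const_div_atTop_nhds_zero_nat C).const_add b
  have hle : ∀ᶠ m : ℕ in atTop, SDp x y m ≤ b + C / m := by
    filter_upwards [eventually_gt_atTop 0] with m hm
    have hm : (0 : ℝ) < m := by exact_mod_cast hm
    rw [SDp_eq_matchCount_div, div_le_iff₀ hm, add_mul, div_mul_cancel₀ _ hm.ne']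
    linarith [h m]
  calc USD x y ≤ limsup (fun m : ℕ => b + C / m) atTop :=
        limsup_le_limsup hle (isBoundedUnder_ge_SDp x y).isCoboundedUnder_le ht.isBoundedUnder_le
    _ = b := ht.limsup_eq

end Density

theorem technical_infinite (n i : ℕ) (hg : 4 * Nat.gcd i (2 ^ n) ≤ 2 ^ n)
    (x y : ℕ → ℕ) (hx : IsBlockSeq n x) (hy : IsBlockSeq n y) :
    1/4 ≤ LSD x (fun j => y (i + j)) ∧
      LSD x (fun j => y (i + j)) ≤ USD x (fun j => y (i + j)) ∧
      USD x (fun j => y (i + j)) ≤ 3/4 := by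
  obtain ⟨v, d, hd, rfl, hv⟩ := exists_two_pow_mul_odd_of_four_mul_gcd_le hg
  obtain ⟨N, rfl⟩ : ∃ N, n = N + 2 + v := ⟨n - 2 - v, by omega⟩
  have hcount := le_four_mul_add_of_periodic_bounds (matchCount_mono _ _) (by positivity)
    (matchCount_two_pow_mul_of_odd hd v hx hy)
  refine ⟨le_LSD_of_le_matchCount_add (C := 2 ^ v) fun m => ?_, LSD_le_USD _ _,
    USD_le_of_matchCount_le_add (C := 3 * 2 ^ v) fun m => ?_⟩
  · have hlow := (hcount m).1
    rify at hlow
    linarith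
  · have hup := (hcount m).2
    rify at hup
    linarith
end

section
/- For every i ∈ ℕ with i ≥ 1, the Thue–Morse sequence t satisfies 1/4 ≤ LSD(t, t[i..∞]) ≤ USD(t, t[i..∞]) ≤ 3/4. -/
/-!
Since `t (2n) = t n` and `t (2n+1) = 1 - t n`, doubling the shift doubles the number of
agreements: among the first `2n` positions, `t` and its shift by `2i` agree exactly twice as
often as `t` and its shift by `i` among the first `n`. For an odd shift `i`, look at a block
`4q, …, 4q+3`: `t (4q+1) = t (4q+2)`, while `i + 4q + 1 = 2m` and `i + 4q + 2 = 2m + 1` carry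
different values of `t`, so exactly one of the two middle positions agrees and every block of
four has between one and three agreements. Writing `i = 2^e (2k+1)`, every block of length
`2^(e+2)` therefore has agreement density in `[1/4, 3/4]`, and block densities bound the
lower and upper densities.
-/

open Filter Topology Nat

section BlockDensity

variable {p : ℕ → Prop} [DecidablePred p] {L : ℕ} {α β : ℝ}

def blockCount (p : ℕ → Prop) [DecidablePred p] (L q : ℕ) : ℕ :=
  count (fun k ↦ p (L * q + k)) L

lemma count_mul_succ (q : ℕ) : count p (L * (q + 1)) = count p (L * q) + blockCount p L q := by
  rw [mul_add_one, count_add, blockCount]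

lemma count_div_le_one (n : ℕ) : (count p n : ℝ) / n ≤ 1 :=
  div_le_one_of_le₀ (by exact_mod_cast count_le p) n.cast_nonneg

lemma le_count_mul (hα : ∀ q, α * L ≤ blockCount p L q) (m : ℕ) :
    α * (L * m : ℕ) ≤ count p (L * m) := by
  induction m with
  | zero => simp
  | succ m ih => have := hα m; push_cast [count_mul_succ] at *; linarith

lemma count_mul_le (hβ : ∀ q, (blockCount p L q : ℝ) ≤ β * L) (m : ℕ) :
    count p (L * m) ≤ β * (L * m : ℕ) := by
  induction m with
  | zero => simp
  | succ m ih => have := hβ m; push_cast [count_mul_succ] at *; linarith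

lemma le_count_of_blocks (hL : 0 < L) (hα₀ : 0 ≤ α) (hα : ∀ q, α * L ≤ blockCount p L q)
    (n : ℕ) : α * (n - L) ≤ count p n := by
  have hle : (n : ℝ) - L ≤ (L * (n / L) : ℕ) := by
    have h : n ≤ L * (n / L) + L := by rw [← mul_add_one]; exact (lt_mul_div_succ n hL).le
    have h' : (n : ℝ) ≤ (L * (n / L) : ℕ) + L := by exact_mod_cast h
    linarith
  calc α * (n - L) ≤ α * (L * (n / L) : ℕ) := mul_le_mul_of_nonneg_left hle hα₀
    _ ≤ count p (L * (n / L)) := le_count_mul hα _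
    _ ≤ count p n := by exact_mod_cast count_monotone p (Nat.mul_div_le n L)

lemma count_le_of_blocks (hL : 0 < L) (hβ : ∀ q, (blockCount p L q : ℝ) ≤ β * L) (n : ℕ) :
    count p n ≤ β * (n + L) := by
  have hβ₀ : 0 ≤ β :=
    nonneg_of_mul_nonneg_left ((Nat.cast_nonneg _).trans (hβ 0)) (by exact_mod_cast hL)
  have hle : ((L * (n / L + 1) : ℕ) : ℝ) ≤ n + L := by
    have : L * (n / L + 1) ≤ n + L := by
      rw [mul_add_one]; exact Nat.add_le_add_right (Nat.mul_div_le n L) L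
    exact_mod_cast this
  calc (count p n : ℝ) ≤ count p (L * (n / L + 1)) := by
        exact_mod_cast count_monotone p (lt_mul_div_succ n hL).le
    _ ≤ β * (L * (n / L + 1) : ℕ) := count_mul_le hβ _
    _ ≤ β * (n + L) := mul_le_mul_of_nonneg_left hle hβ₀

lemma le_liminf_count_div_of_blocks (hL : 0 < L) (hα₀ : 0 ≤ α)
    (hα : ∀ q, α * L ≤ blockCount p L q) :
    α ≤ liminf (fun n ↦ (count p n : ℝ) / n) atTop := by
  have hlim : Tendsto (fun n : ℕ ↦ α * (n - L) / n) atTop (𝓝 α) := by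
    have h := ((tendsto_const_nhds (x := (1 : ℝ))).sub
      (tendsto_const_div_atTop_nhds_zero_nat (L : ℝ))).const_mul α
    rw [sub_zero, mul_one] at h
    refine h.congr' ?_
    filter_upwards [eventually_ne_atTop 0] with n hn
    field_simp
  have hcomp : ∀ n : ℕ, α * (n - L) / n ≤ count p n / n := fun n ↦
    div_le_div_of_nonneg_right (le_count_of_blocks hL hα₀ hα n) n.cast_nonneg
  calc α = liminf (fun n : ℕ ↦ α * (n - L) / n) atTop := hlim.liminf_eq.symm
    _ ≤ _ := liminf_le_liminf (.of_forall hcomp) hlim.isBoundedUnder_ge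
        (isBoundedUnder_of ⟨1, fun n ↦ count_div_le_one n⟩).isCoboundedUnder_ge

lemma limsup_count_div_le_of_blocks (hL : 0 < L)
    (hβ : ∀ q, (blockCount p L q : ℝ) ≤ β * L) :
    limsup (fun n ↦ (count p n : ℝ) / n) atTop ≤ β := by
  have hlim : Tendsto (fun n : ℕ ↦ β * (n + L) / n) atTop (𝓝 β) := by
    have h := ((tendsto_const_nhds (x := (1 : ℝ))).add
      (tendsto_const_div_atTop_nhds_zero_nat (L : ℝ))).const_mul β
    rw [add_zero, mul_one] at h
    refine h.congr' ?_
    filter_upwards [eventually_ne_atTop 0] with n hn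
    field_simp
  have hcomp : ∀ n : ℕ, (count p n : ℝ) / n ≤ β * (n + L) / n := fun n ↦
    div_le_div_of_nonneg_right (count_le_of_blocks hL hβ n) n.cast_nonneg
  calc limsup (fun n ↦ (count p n : ℝ) / n) atTop
      ≤ limsup (fun n : ℕ ↦ β * (n + L) / n) atTop :=
        limsup_le_limsup (.of_forall hcomp)
          (isBoundedUnder_of ⟨0, fun n ↦ by positivity⟩).isCoboundedUnder_le
          hlim.isBoundedUnder_le
    _ = β := hlim.limsup_eq

end BlockDensity

lemma t_le_one (n : ℕ) : t n ≤ 1 := Nat.le_of_lt_succ (Nat.mod_lt _ two_pos)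

lemma t_two_mul (n : ℕ) : t (2 * n) = t n := by
  rcases Nat.eq_zero_or_pos n with rfl | hn
  · rfl
  · rw [t, t, Nat.digits_def' one_lt_two (by omega)]
    simp

lemma t_two_mul_add_one (n : ℕ) : t (2 * n + 1) = 1 - t n := by
  have h : t (2 * n + 1) = (t n + 1) % 2 := by
    rw [t, t, Nat.digits_def' one_lt_two (by omega)]
    simp [Nat.mul_add_div]
  have := t_le_one n
  omega

lemma t_four_mul_add_one (q : ℕ) : t (4 * q + 1) = t (4 * q + 2) := by
  rw [show 4 * q + 1 = 2 * (2 * q) + 1 by ring, show 4 * q + 2 = 2 * (2 * q + 1) by ring,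
    t_two_mul_add_one, t_two_mul, t_two_mul, t_two_mul_add_one]

abbrev AgreesWithShift (i j : ℕ) : Prop := t j = t (i + j)

lemma count_agreesWithShift_two_mul (i n : ℕ) :
    count (AgreesWithShift (2 * i)) (2 * n) = 2 * count (AgreesWithShift i) n := by
  induction n with
  | zero => rfl
  | succ n ih =>
    have heven : AgreesWithShift (2 * i) (2 * n) ↔ AgreesWithShift i n := by
      rw [AgreesWithShift, ← mul_add, t_two_mul, t_two_mul]
    have hodd : AgreesWithShift (2 * i) (2 * n + 1) ↔ AgreesWithShift i n := by
      rw [AgreesWithShift, ← add_assoc, ← mul_add, t_two_mul_add_one, t_two_mul_add_one]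
      have := t_le_one n; have := t_le_one (i + n); omega
    rw [show 2 * (n + 1) = 2 * n + 1 + 1 by ring, count_succ, count_succ, count_succ, ih]
    simp only [heven, hodd]
    split_ifs <;> ring

lemma blockCount_agreesWithShift_two_mul (i L q : ℕ) :
    blockCount (AgreesWithShift (2 * i)) (2 * L) q = 2 * blockCount (AgreesWithShift i) L q := by
  have h := count_mul_succ (p := AgreesWithShift (2 * i)) (L := 2 * L) q
  rw [mul_assoc, mul_assoc, count_agreesWithShift_two_mul, count_agreesWithShift_two_mul,
    count_mul_succ] at h
  omega

lemma blockCount_agreesWithShift_odd {i : ℕ} (hi : Odd i) (q : ℕ) :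
    1 ≤ blockCount (AgreesWithShift i) 4 q ∧ blockCount (AgreesWithShift i) 4 q ≤ 3 := by
  obtain ⟨k, rfl⟩ := hi
  have hmid : AgreesWithShift (2 * k + 1) (4 * q + 1) ↔
      ¬AgreesWithShift (2 * k + 1) (4 * q + 2) := by
    rw [AgreesWithShift, AgreesWithShift, t_four_mul_add_one,
      show 2 * k + 1 + (4 * q + 1) = 2 * (k + 2 * q + 1) by ring,
      show 2 * k + 1 + (4 * q + 2) = 2 * (k + 2 * q + 1) + 1 by ring, t_two_mul, t_two_mul_add_one]
    have := t_le_one (4 * q + 2); have := t_le_one (k + 2 * q + 1); omega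
  simp only [blockCount, count_succ, count_zero, add_zero]
  by_cases h : AgreesWithShift (2 * k + 1) (4 * q + 1)
  · simp only [if_pos h, if_neg (hmid.1 h)]
    split_ifs <;> omega
  · simp only [if_neg h, if_pos (not_not.1 (mt hmid.2 h))]
    split_ifs <;> omega

lemma exists_blockCount_agreesWithShift_bounds (i : ℕ) (hi : 1 ≤ i) :
    ∃ L > 0, ∀ q, L ≤ 4 * blockCount (AgreesWithShift i) L q ∧
      4 * blockCount (AgreesWithShift i) L q ≤ 3 * L := by
  induction i using Nat.strong_induction_on with
  | _ i ih =>
    rcases Nat.even_or_odd' i with ⟨m, rfl | rfl⟩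
    · obtain ⟨L, hL, hblock⟩ := ih m (by omega) (by omega)
      refine ⟨2 * L, by omega, fun q ↦ ?_⟩
      rw [blockCount_agreesWithShift_two_mul]
      have := hblock q
      omega
    · refine ⟨4, by norm_num, fun q ↦ ?_⟩
      have := blockCount_agreesWithShift_odd (odd_two_mul_add_one m) q
      omega

lemma SDp_eq_count_div (x y : ℕ → ℕ) (n : ℕ) :
    SDp x y n = (count (fun j ↦ x j = y j) n : ℝ) / n := by
  rw [SDp, Finset.sum_boole, count_eq_card_filter_range]

theorem technical_infinite_t (i : ℕ) (hi : 1 ≤ i) :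
    1/4 ≤ LSD t (fun j => t (i + j)) ∧
      LSD t (fun j => t (i + j)) ≤ USD t (fun j => t (i + j)) ∧
      USD t (fun j => t (i + j)) ≤ 3/4 := by
  obtain ⟨L, hL, hblock⟩ := exists_blockCount_agreesWithShift_bounds i hi
  have hSD : SDp t (fun j ↦ t (i + j)) = fun n ↦ (count (AgreesWithShift i) n : ℝ) / n :=
    funext (SDp_eq_count_div _ _)
  rw [LSD, USD, hSD]
  refine ⟨le_liminf_count_div_of_blocks hL (by norm_num) fun q ↦ ?_,
    liminf_le_limsup (isBoundedUnder_of ⟨1, fun n ↦ count_div_le_one n⟩)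
      (isBoundedUnder_of ⟨0, fun n ↦ by positivity⟩),
    limsup_count_div_le_of_blocks hL fun q ↦ ?_⟩ <;>
  · have := hblock q
    rify at this
    linarith
end
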